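/- arXiv:1307.6837 — 2 statements merged into one kernel-verified Lean document; each statement's English description precedes it below -/
import Mathlib

section
/- The boundary TSP functional is superadditive: if R_1 and R_2 are compact subsets of ℝ^d with disjoint interiors, then for any finite point set F, T_B(F, R_1 ∪ R_2) ≥ T_B(F, R_1) + T_B(F, R_2). -/
open MeasureTheory Filter

noncomputable section

/-- The unit hypercube `Ω = [0,1]^d` in `ℝ^d`. -/
def unitCube (d : ℕ) : Set (EuclideanSpace ℝ (Fin d)) :=
  {x | ∀ i, x i ∈ Set.Icc (0 : ℝ) 1}

/-- The subcube `ω_k` (for `k : Fin d → Fin m`) of the partition of `[0,1]^d` into `m^d`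
congruent subcubes of edge length `1/m` (half-open, except closed at the top face). -/
def cell {d : ℕ} (m : ℕ) (k : Fin d → Fin m) : Set (EuclideanSpace ℝ (Fin d)) :=
  {x | ∀ i, x i ∈ (if (k i : ℕ) + 1 = m
      then Set.Icc ((k i : ℝ) / m) (((k i : ℝ) + 1) / m)
      else Set.Ico ((k i : ℝ) / m) (((k i : ℝ) + 1) / m))}

/-- Length of the polygonal path visiting the points of the list `l` in order,
for the distance function `ρ`. -/
def pathLen {E : Type*} (ρ : E → E → ℝ) (l : List E) : ℝ :=
  (List.zipWith ρ l l.tail).sum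

/-- Length of the closed tour visiting the points of the list `l` in order and coming back
to the starting point, for the distance function `ρ`. -/
def tourLen {E : Type*} (ρ : E → E → ℝ) (l : List E) : ℝ :=
  pathLen ρ (l ++ l.take 1)

/-- `l` enumerates the points of the set `F` (each exactly once). -/
def Enumerates {E : Type*} (l : List E) (F : Set E) : Prop :=
  l.Nodup ∧ ∀ z, z ∈ l ↔ z ∈ F

/-- `T F`: the length of the shortest Hamiltonian path through the (finite) set `F`,
i.e. the minimum over orderings of `F` of the sum of consecutive Euclidean distances. -/
def T {E : Type*} [PseudoMetricSpace E] (F : Set E) : ℝ :=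
  sInf {L | ∃ l : List E, Enumerates l F ∧ pathLen dist l = L}

/-- The pseudometric obtained from the Euclidean metric by identifying all points of the
boundary `∂R` of `R`: `d(a,b) = min(dist a b, dist(a,∂R) + dist(b,∂R))`. -/
def bdist {E : Type*} [PseudoMetricSpace E] (R : Set E) (a b : E) : ℝ :=
  min (dist a b) (Metric.infDist a (frontier R) + Metric.infDist b (frontier R))

/-- `TB F R`: the boundary TSP, i.e. the length of the shortest Hamiltonian tour through
`F ∩ R` for the pseudometric obtained from the Euclidean one by identifying the points of
the boundary `∂R` (travel along the boundary is free). -/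
def TB {E : Type*} [PseudoMetricSpace E] (F R : Set E) : ℝ :=
  sInf {L | ∃ l : List E, Enumerates l (F ∩ R) ∧ tourLen (bdist R) l = L}

/-- Cumulative length of the polygonal path through `l` up to its `(j+1)`-st point. -/
def cumLen {E : Type*} [PseudoMetricSpace E] (l : List E) (j : ℕ) : ℝ :=
  pathLen dist (l.take (j + 1))

/-- `γ` is the constant-speed parameterization, on `[0,1]`, of the polygonal curve joining
the consecutive points of `l`: it traverses the segment from `l[j]` to `l[j+1]` affinely on
the time interval `[cumLen l j / pathLen l, cumLen l (j+1) / pathLen l]`. -/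
def IsConstSpeedParam {d : ℕ} (l : List (EuclideanSpace ℝ (Fin d)))
    (γ : ℝ → EuclideanSpace ℝ (Fin d)) : Prop :=
  ∀ j : ℕ, ∀ h : j + 1 < l.length, ∀ u : ℝ, u ∈ Set.Icc (0 : ℝ) 1 →
    γ (((1 - u) * cumLen l j + u * cumLen l (j + 1)) / pathLen dist l)
      = (1 - u) • l[j]'(Nat.lt_of_succ_lt h) + u • l[j + 1]'h

/-- `restLen l γ B`: the one-dimensional length of the portion lying in `B` of the polygonal
curve through `l` parameterized at constant speed by `γ` on `[0,1]`; equivalently,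
`pathLen l` times the time spent in `B`. -/
def restLen {d : ℕ} (l : List (EuclideanSpace ℝ (Fin d)))
    (γ : ℝ → EuclideanSpace ℝ (Fin d)) (B : Set (EuclideanSpace ℝ (Fin d))) : ℝ :=
  pathLen dist l * (volume (γ ⁻¹' B ∩ Set.Icc (0 : ℝ) 1)).toReal

/-- The first `N` sample points `X_N = {x_1, …, x_N}` of the sequence `x` at sample `ω`. -/
def sampleSet {α Ω₀ : Type*} (x : ℕ → Ω₀ → α) (N : ℕ) (ω : Ω₀) : Set α :=
  (fun i => x i ω) '' Set.Iio N


/-!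
Write `δᵢ x = infDist x Rᵢᶜ` for the depth of `x` in `Rᵢ`. The pseudometric
`min (dist x y) (δᵢ x + δᵢ y)` agrees with the boundary pseudometric of `Rᵢ` on `Rᵢ` and makes
sense on all of space, so dropping the points outside `Rᵢ` from an optimal tour of
`F ∩ (R₁ ∪ R₂)` bounds `T_B(F, Rᵢ)` by that tour measured in this pseudometric. The two
pseudometrics add up to at most the boundary pseudometric of `R₁ ∪ R₂`: since the interiors are
disjoint, at each point at most one depth is positive, both are at most the depth in `R₁ ∪ R₂`,
and the balls of radii `δ₁ x` and `δ₂ y` are disjoint, whence `δ₁ x + δ₂ y ≤ dist x y`.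
-/

open Metric Set

section PathLength

variable {α : Type*} {ρ ρ₁ ρ₂ : α → α → ℝ}

@[simp]
lemma pathLen_nil : pathLen ρ [] = 0 := by simp [pathLen]

@[simp]
lemma pathLen_singleton (a : α) : pathLen ρ [a] = 0 := by simp [pathLen]

@[simp]
lemma pathLen_cons_cons (a b : α) (l : List α) :
    pathLen ρ (a :: b :: l) = ρ a b + pathLen ρ (b :: l) := by
  simp [pathLen]

lemma pathLen_nonneg (h₀ : ∀ a b, 0 ≤ ρ a b) : ∀ l : List α, 0 ≤ pathLen ρ l
  | [] | [_] => by simp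
  | a :: b :: l => by
    rw [pathLen_cons_cons]
    exact add_nonneg (h₀ a b) (pathLen_nonneg h₀ (b :: l))

lemma pathLen_add_le (h : ∀ a b, ρ₁ a b + ρ₂ a b ≤ ρ a b) :
    ∀ l : List α, pathLen ρ₁ l + pathLen ρ₂ l ≤ pathLen ρ l
  | [] | [_] => by simp
  | a :: b :: l => by
    simp only [pathLen_cons_cons]
    linarith [h a b, pathLen_add_le h (b :: l)]

lemma pathLen_congr :
    ∀ l : List α, (∀ a ∈ l, ∀ b ∈ l, ρ₁ a b = ρ₂ a b) → pathLen ρ₁ l = pathLen ρ₂ l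
  | [], _ | [_], _ => by simp
  | a :: b :: l, h => by
    simp only [pathLen_cons_cons]
    rw [h a (by simp) b (by simp), pathLen_congr (b :: l) fun x hx y hy =>
      h x (List.mem_cons_of_mem a hx) y (List.mem_cons_of_mem a hy)]

lemma pathLen_append_cons (l₁ : List α) (b : α) (l₂ : List α) :
    pathLen ρ (l₁ ++ b :: l₂) = pathLen ρ (l₁ ++ [b]) + pathLen ρ (b :: l₂) := by
  induction l₁ with
  | nil => simp
  | cons a l₁ ih =>
    cases l₁ with
    | nil => simp
    | cons c l₁ =>
      simp only [List.cons_append, pathLen_cons_cons] at ih ⊢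
      rw [ih, add_assoc]

lemma pathLen_cons_le_of_sublist (h₀ : ∀ a b, 0 ≤ ρ a b)
    (htri : ∀ a b c, ρ a c ≤ ρ a b + ρ b c) {l₁ l₂ : List α} (h : l₁.Sublist l₂) (x : α) :
    pathLen ρ (x :: l₁) ≤ pathLen ρ (x :: l₂) := by
  induction h generalizing x with
  | slnil => rfl
  | @cons _ l₂ a _ ih =>
    refine (ih x).trans ?_
    cases l₂ with
    | nil => simpa using h₀ x a
    | cons b l₂ =>
      simp only [pathLen_cons_cons]
      linarith [htri x a b]
  | cons_cons a _ ih =>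
    simpa using ih a

lemma tourLen_nonneg (h₀ : ∀ a b, 0 ≤ ρ a b) (l : List α) : 0 ≤ tourLen ρ l :=
  pathLen_nonneg h₀ _

lemma tourLen_add_le (h : ∀ a b, ρ₁ a b + ρ₂ a b ≤ ρ a b) (l : List α) :
    tourLen ρ₁ l + tourLen ρ₂ l ≤ tourLen ρ l :=
  pathLen_add_le h _

lemma tourLen_congr {l : List α} (h : ∀ a ∈ l, ∀ b ∈ l, ρ₁ a b = ρ₂ a b) :
    tourLen ρ₁ l = tourLen ρ₂ l := by
  have hmem : ∀ a ∈ l ++ l.take 1, a ∈ l := by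
    simpa using fun a ha => ha.elim id List.mem_of_mem_take
  exact pathLen_congr _ fun a ha b hb => h a (hmem a ha) b (hmem b hb)

lemma tourLen_append_comm (l₁ l₂ : List α) : tourLen ρ (l₁ ++ l₂) = tourLen ρ (l₂ ++ l₁) := by
  rcases l₁ with _ | ⟨a, l₁⟩
  · simp
  rcases l₂ with _ | ⟨b, l₂⟩
  · simp
  have h₁ := pathLen_append_cons (ρ := ρ) (a :: l₁) b (l₂ ++ [a])
  have h₂ := pathLen_append_cons (ρ := ρ) (b :: l₂) a (l₁ ++ [b])
  simp only [tourLen, List.cons_append, List.append_assoc, List.take_succ_cons,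
    List.take_zero] at h₁ h₂ ⊢
  rw [h₁, h₂, add_comm]

lemma tourLen_le_of_sublist (h₀ : ∀ a b, 0 ≤ ρ a b) (htri : ∀ a b c, ρ a c ≤ ρ a b + ρ b c)
    {l₁ l₂ : List α} (h : l₁.Sublist l₂) : tourLen ρ l₁ ≤ tourLen ρ l₂ := by
  rcases l₁ with _ | ⟨a, l₁⟩
  · simpa [tourLen] using tourLen_nonneg h₀ l₂
  obtain ⟨r₁, r₂, rfl, ha, hl₁⟩ := List.cons_sublist_iff.1 h
  obtain ⟨s, t, rfl⟩ := List.append_of_mem ha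
  calc tourLen ρ (a :: l₁) = pathLen ρ (a :: (l₁ ++ [a])) := by simp [tourLen]
    _ ≤ pathLen ρ (a :: (t ++ r₂ ++ s ++ [a])) :=
      have hsub : l₁.Sublist (t ++ r₂ ++ s) :=
        (hl₁.trans (List.sublist_append_right t r₂)).trans (List.sublist_append_left _ s)
      pathLen_cons_le_of_sublist h₀ htri (hsub.append_right [a]) a
    _ = tourLen ρ (s ++ a :: t ++ r₂) := by
      rw [List.append_assoc s, tourLen_append_comm]
      simp [tourLen]

end PathLength

/-- `dist` with all points of `s` identified; `bdist R` is `collapseDist (frontier R)`. -/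
def collapseDist {E : Type*} [PseudoMetricSpace E] (s : Set E) (x y : E) : ℝ :=
  min (dist x y) (infDist x s + infDist y s)

section CollapseDist

variable {E : Type*} [PseudoMetricSpace E] (s : Set E) (x y z : E)

lemma collapseDist_nonneg : 0 ≤ collapseDist s x y :=
  le_min dist_nonneg (add_nonneg infDist_nonneg infDist_nonneg)

lemma collapseDist_le_dist : collapseDist s x y ≤ dist x y := min_le_left _ _

lemma collapseDist_le_add : collapseDist s x y ≤ infDist x s + infDist y s := min_le_right _ _

lemma collapseDist_triangle : collapseDist s x z ≤ collapseDist s x y + collapseDist s y z := by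
  have hx : infDist x s ≤ infDist y s + dist x y := infDist_le_infDist_add_dist
  have hz : infDist z s ≤ infDist y s + dist y z := by
    rw [dist_comm]; exact infDist_le_infDist_add_dist
  have hy : 0 ≤ infDist y s := infDist_nonneg
  have := dist_triangle x y z
  unfold collapseDist
  rcases min_cases (dist x y) (infDist x s + infDist y s) with ⟨h₁, -⟩ | ⟨h₁, -⟩ <;>
  rcases min_cases (dist y z) (infDist y s + infDist z s) with ⟨h₂, -⟩ | ⟨h₂, -⟩ <;>
  rw [h₁, h₂]
  · exact min_le_of_left_le (by linarith)
  all_goals exact min_le_of_right_le (by linarith)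

end CollapseDist

section NormedSpace

variable {E : Type*} [NormedAddCommGroup E] [NormedSpace ℝ E] {s s₁ s₂ : Set E} {x y : E}

lemma infDist_frontier_eq_infDist_compl [FiniteDimensional ℝ E] (hx : x ∈ s) :
    infDist x (frontier s) = infDist x sᶜ := by
  rcases eq_or_ne s univ with rfl | hs
  · simp
  obtain ⟨y, hy, hxy⟩ := exists_mem_frontier_infDist_compl_eq_dist hx hs
  refine le_antisymm (hxy ▸ infDist_le_dist_of_mem hy) ?_
  rw [← infDist_closure]
  refine infDist_le_infDist_of_subset ?_ ⟨y, hy⟩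
  rw [← frontier_compl]
  exact frontier_subset_closure

lemma bdist_eq_collapseDist_compl [FiniteDimensional ℝ E] (hx : x ∈ s) (hy : y ∈ s) :
    bdist s x y = collapseDist sᶜ x y := by
  rw [bdist, collapseDist, infDist_frontier_eq_infDist_compl hx,
    infDist_frontier_eq_infDist_compl hy]

lemma tourLen_bdist_eq_collapseDist_compl [FiniteDimensional ℝ E] {l : List E}
    (h : ∀ x ∈ l, x ∈ s) : tourLen (bdist s) l = tourLen (collapseDist sᶜ) l :=
  tourLen_congr fun a ha b hb => bdist_eq_collapseDist_compl (h a ha) (h b hb)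

/-- The balls of radii `infDist x s₁ᶜ` and `infDist y s₂ᶜ` lie in the disjoint open sets
`interior s₁` and `interior s₂`. -/
lemma infDist_compl_add_infDist_compl_le_dist (hdisj : Disjoint (interior s₁) (interior s₂))
    (hx : 0 < infDist x s₁ᶜ) (hy : 0 < infDist y s₂ᶜ) :
    infDist x s₁ᶜ + infDist y s₂ᶜ ≤ dist x y := by
  refine (disjoint_ball_ball_iff hx hy).1 (hdisj.mono ?_ ?_) <;>
  exact interior_maximal ball_infDist_compl_subset isOpen_ball

lemma infDist_compl_eq_zero_or (hdisj : Disjoint (interior s₁) (interior s₂)) (x : E) :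
    infDist x s₁ᶜ = 0 ∨ infDist x s₂ᶜ = 0 := by
  by_contra! h
  have h₁ := infDist_nonneg.lt_of_ne' h.1
  have h₂ := infDist_nonneg.lt_of_ne' h.2
  have := infDist_compl_add_infDist_compl_le_dist hdisj h₁ h₂
  rw [dist_self] at this
  linarith

lemma collapseDist_compl_add_le_dist (hdisj : Disjoint (interior s₁) (interior s₂)) :
    collapseDist s₁ᶜ x y + collapseDist s₂ᶜ x y ≤ dist x y := by
  have h₁₂ := infDist_compl_add_infDist_compl_le_dist hdisj (x := x) (y := y)
  have h₂₁ := infDist_compl_add_infDist_compl_le_dist hdisj.symm (x := x) (y := y)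
  -- At most one depth is positive at each point, so if both collapsed distances are positive
  -- their sum is at most one of the cross sums `h₁₂`, `h₂₁`.
  have hx := infDist_compl_eq_zero_or hdisj x
  have hy := infDist_compl_eq_zero_or hdisj y
  grind [collapseDist_le_dist, collapseDist_le_add, infDist_nonneg]

lemma collapseDist_compl_add_le (hdisj : Disjoint (interior s₁) (interior s₂))
    (hs : IsCompact (s₁ ∪ s₂)) :
    collapseDist s₁ᶜ x y + collapseDist s₂ᶜ x y ≤ collapseDist (s₁ ∪ s₂)ᶜ x y := by
  rcases subsingleton_or_nontrivial E with hE | hE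
  · have : dist x y = 0 := by rw [Subsingleton.elim x y, dist_self]
    linarith [collapseDist_le_dist s₁ᶜ x y, collapseDist_le_dist s₂ᶜ x y,
      collapseDist_nonneg (s₁ ∪ s₂)ᶜ x y]
  have hne : (s₁ ∪ s₂)ᶜ.Nonempty := nonempty_compl.2 hs.ne_univ
  have hle : ∀ z, infDist z s₁ᶜ + infDist z s₂ᶜ ≤ infDist z (s₁ ∪ s₂)ᶜ := fun z => by
    rcases infDist_compl_eq_zero_or hdisj z with h | h <;> rw [h]
    · simpa using infDist_le_infDist_of_subset (compl_subset_compl.2 subset_union_right) hne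
    · simpa using infDist_le_infDist_of_subset (compl_subset_compl.2 subset_union_left) hne
  refine le_min (collapseDist_compl_add_le_dist hdisj) ?_
  linarith [collapseDist_le_add s₁ᶜ x y, collapseDist_le_add s₂ᶜ x y, hle x, hle y]

end NormedSpace

section BoundaryTSP

variable {E : Type*}

lemma Enumerates.filter_mem {l : List E} {s : Set E} (h : Enumerates l s) (t : Set E)
    [DecidablePred (· ∈ t)] : Enumerates (l.filter (· ∈ t)) (s ∩ t) :=
  ⟨h.1.filter _, fun z => by simp [h.2 z]⟩

variable [PseudoMetricSpace E] {F R : Set E} {l : List E}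

lemma TB_le_tourLen (hl : Enumerates l (F ∩ R)) : TB F R ≤ tourLen (bdist R) l :=
  csInf_le ⟨0, by
    rintro _ ⟨l', -, rfl⟩
    exact tourLen_nonneg (collapseDist_nonneg (frontier R)) l'⟩ ⟨l, hl, rfl⟩

lemma le_TB {c : ℝ} (hF : (F ∩ R).Finite)
    (h : ∀ l, Enumerates l (F ∩ R) → c ≤ tourLen (bdist R) l) : c ≤ TB F R := by
  refine le_csInf ⟨_, hF.toFinset.toList, ⟨Finset.nodup_toList _, fun z => by simp⟩, rfl⟩ ?_
  rintro _ ⟨l, hl, rfl⟩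
  exact h l hl

end BoundaryTSP

/-- The boundary TSP functional is superadditive: if `R₁` and `R₂` are compact subsets of
`ℝ^d` with disjoint interiors, then for any finite point set `F`,
`T_B(F, R₁ ∪ R₂) ≥ T_B(F, R₁) + T_B(F, R₂)`. -/
theorem boundaryTSP_superadditive {d : ℕ}
    (R₁ R₂ : Set (EuclideanSpace ℝ (Fin d)))
    (hR₁ : IsCompact R₁) (hR₂ : IsCompact R₂)
    (hdisj : Disjoint (interior R₁) (interior R₂))
    (F : Set (EuclideanSpace ℝ (Fin d))) (hF : F.Finite) :
    TB F R₁ + TB F R₂ ≤ TB F (R₁ ∪ R₂) := by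
  classical
  refine le_TB (hF.inter_of_left _) fun l hl => ?_
  have TB_le {R} (hR : R ⊆ R₁ ∪ R₂) : TB F R ≤ tourLen (collapseDist Rᶜ) l := by
    have hlR := hl.filter_mem R
    rw [inter_assoc, inter_eq_right.2 hR] at hlR
    calc TB F R ≤ tourLen (bdist R) (l.filter (· ∈ R)) := TB_le_tourLen hlR
      _ = tourLen (collapseDist Rᶜ) (l.filter (· ∈ R)) :=
        tourLen_bdist_eq_collapseDist_compl fun x hx => ((hlR.2 x).1 hx).2
      _ ≤ tourLen (collapseDist Rᶜ) l :=
        tourLen_le_of_sublist (collapseDist_nonneg _) (collapseDist_triangle _)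
          List.filter_sublist
  calc TB F R₁ + TB F R₂
      ≤ tourLen (collapseDist R₁ᶜ) l + tourLen (collapseDist R₂ᶜ) l :=
        add_le_add (TB_le subset_union_left) (TB_le subset_union_right)
    _ ≤ tourLen (collapseDist (R₁ ∪ R₂)ᶜ) l :=
        tourLen_add_le (fun x y => collapseDist_compl_add_le hdisj (hR₁.union hR₂)) l
    _ = tourLen (bdist (R₁ ∪ R₂)) l :=
        (tourLen_bdist_eq_collapseDist_compl fun x hx => ((hl.2 x).1 hx).2).symm
end
end

section
/- Let μ and ν be Borel probability measures on a compact metric space Ω, let ε > 0, and let (ω_i)_{i∈I} be a finite Borel partition of Ω such that every ω_i has diameter less than ε. Then for every Borel set A ⊆ Ω, μ(A) ≤ ν(A^ε) + (1/2) Σ_{i∈I} |μ(ω_i) − ν(ω_i)|, where A^ε = {x ∈ Ω : ∃ y ∈ A, dist(x,y) < ε} is the open ε-neighborhood of A. -/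
open MeasureTheory

/-- **Coupling step.** Let `μ` and `ν` be Borel probability measures on a compact metric
space `Ω`, let `ε > 0`, and let `(ω_i)_{i ∈ I}` be a finite Borel partition of `Ω` such
that every `ω_i` has diameter less than `ε`.  Then for every Borel set `A ⊆ Ω`,
`μ(A) ≤ ν(A^ε) + (1/2) Σ_i |μ(ω_i) − ν(ω_i)|`, where
`A^ε = {x ∈ Ω : ∃ y ∈ A, dist(x,y) < ε}` is the open `ε`-neighborhood of `A`. -/
theorem measure_le_measure_thickening_add_half_partition_discrepancy
    {Ω : Type*} [MetricSpace Ω] [CompactSpace Ω]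
    [MeasurableSpace Ω] [BorelSpace Ω]
    (μ ν : Measure Ω) [IsProbabilityMeasure μ] [IsProbabilityMeasure ν]
    {ε : ℝ} (hε : 0 < ε)
    {I : Type*} [Fintype I] (ω : I → Set Ω)
    (hmeas : ∀ i, MeasurableSet (ω i))
    (hdisj : Pairwise (Function.onFun Disjoint ω))
    (hcover : (⋃ i, ω i) = Set.univ)
    (hdiam : ∀ i, Metric.diam (ω i) < ε)
    (A : Set Ω) (hA : MeasurableSet A) :
    (μ A).toReal ≤ (ν (Metric.thickening ε A)).toReal
      + (1 / 2) * ∑ i, |(μ (ω i)).toReal - (ν (ω i)).toReal| := by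
  classical
  set f : I → ℝ := fun i => (μ (ω i)).toReal with hf
  set g : I → ℝ := fun i => (ν (ω i)).toReal with hg
  set J : Finset I := Finset.univ.filter (fun i => (ω i ∩ A).Nonempty) with hJ
  -- A ⊆ union over J
  have hAsub : A ⊆ ⋃ i ∈ J, ω i := by
    intro x hx
    have : x ∈ ⋃ i, ω i := hcover ▸ Set.mem_univ x
    obtain ⟨i, hi⟩ := Set.mem_iUnion.mp this
    exact Set.mem_biUnion (Finset.mem_filter.mpr ⟨Finset.mem_univ i, ⟨x, hi, hx⟩⟩) hi
  -- union over J ⊆ thickening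
  have hsubT : (⋃ i ∈ J, ω i) ⊆ Metric.thickening ε A := by
    intro x hx
    obtain ⟨i, hiJ, hxi⟩ := Set.mem_iUnion₂.mp hx
    obtain ⟨y, hyi, hyA⟩ := (Finset.mem_filter.mp hiJ).2
    refine Metric.mem_thickening_iff.mpr ⟨y, hyA, ?_⟩
    calc dist x y ≤ Metric.diam (ω i) :=
          Metric.dist_le_diam_of_mem Metric.isBounded_of_compactSpace hxi hyi
      _ < ε := hdiam i
  have hmJ : ∀ (ρ : Measure Ω) [IsProbabilityMeasure ρ],
      (ρ (⋃ i ∈ J, ω i)).toReal = ∑ i ∈ J, (ρ (ω i)).toReal := by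
    intro ρ _
    rw [measure_biUnion_finset (hdisj.set_pairwise _) (fun i _ => hmeas i)]
    rw [ENNReal.toReal_sum (fun i _ => measure_ne_top ρ _)]
  have h1 : (μ A).toReal ≤ ∑ i ∈ J, f i := by
    rw [← hmJ μ]
    exact ENNReal.toReal_mono (measure_ne_top μ _) (measure_mono hAsub)
  have h2 : ∑ i ∈ J, g i ≤ (ν (Metric.thickening ε A)).toReal := by
    rw [← hmJ ν]
    exact ENNReal.toReal_mono (measure_ne_top ν _) (measure_mono hsubT)
  -- total mass identities
  have hsum : ∀ (ρ : Measure Ω) [IsProbabilityMeasure ρ],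
      ∑ i, (ρ (ω i)).toReal = 1 := by
    intro ρ _
    have : ρ (⋃ i, ω i) = 1 := by rw [hcover]; simp
    rw [measure_iUnion hdisj (fun i => hmeas i)] at this
    have := congrArg ENNReal.toReal this
    rw [tsum_fintype, ENNReal.toReal_sum (fun i _ => measure_ne_top ρ _)] at this
    simpa using this
  have hzero : ∑ i, (f i - g i) = 0 := by
    rw [Finset.sum_sub_distrib, hsum μ, hsum ν]; ring
  have hmax : ∑ i ∈ J, (f i - g i) ≤ ∑ i, max (f i - g i) 0 := by
    calc ∑ i ∈ J, (f i - g i) ≤ ∑ i ∈ J, max (f i - g i) 0 :=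
          Finset.sum_le_sum (fun i _ => le_max_left _ _)
      _ ≤ ∑ i, max (f i - g i) 0 :=
          Finset.sum_le_sum_of_subset_of_nonneg (Finset.subset_univ J)
            (fun i _ _ => le_max_right _ _)
  have hhalf : ∑ i, max (f i - g i) 0 = (1/2) * ∑ i, |f i - g i| := by
    have : ∀ i, max (f i - g i) 0 = ((f i - g i) + |f i - g i|) / 2 := by
      intro i; rcases le_or_gt (f i - g i) 0 with h | h
      · rw [max_eq_right h, abs_of_nonpos h]; ring
      · rw [max_eq_left h.le, abs_of_pos h]; ring
    simp_rw [this]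
    rw [← Finset.sum_div, Finset.sum_add_distrib, hzero]
    ring
  have key : ∑ i ∈ J, f i - ∑ i ∈ J, g i ≤ (1/2) * ∑ i, |f i - g i| := by
    rw [← Finset.sum_sub_distrib, ← hhalf]; exact hmax
  linarith
end
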